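/- Let α be a Borel probability measure on ℝ with infinite support and finite moments up to order 2n, with orthonormal polynomials (p_j)_{j=0}^n and eigenvalues ξ_{0,n} ≤ … ≤ ξ_{n,n} of M_n(α). Then 1/ξ_{n,n} ≤ Σ_{j=0}^{n} p_j(0)² = (M_n(α)^{-1})_{0,0} ≤ 1/ξ_{0,n}. -/

import Mathlib

/-!
Orthonormality of `p₀, …, pₙ` says exactly that their coefficient matrix `P` satisfies
`P M Pᵀ = 1` for the moment matrix `M = Mₙ(α)`. Hence `M` is positive definite and
`M⁻¹ = Pᵀ P`, whose `(0, 0)` entry is `∑ pⱼ(0)²`. Diagonalising `M = U diag(ξ) Uᵀ` with `U`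
orthogonal, `(M⁻¹)₀₀ = ∑ₖ U₀ₖ² / ξₖ` is a convex combination of the `1 / ξₖ`, so it lies
between `1 / ξ_max` and `1 / ξ_min`.
-/

open MeasureTheory Matrix

/-- The `k`-th moment of the measure `α`. -/
noncomputable def mom (α : Measure ℝ) (k : ℕ) : ℝ := ∫ x, x ^ k ∂α

/-- The `(N+1) × (N+1)` Hankel moment matrix of `α`. -/
noncomputable def momMatrix (α : Measure ℝ) (N : ℕ) :
    Matrix (Fin (N + 1)) (Fin (N + 1)) ℝ :=
  Matrix.of fun i j => mom α ((i : ℕ) + (j : ℕ))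

/-- The (topological) support of a measure on `ℝ`. -/
def measSupport (α : Measure ℝ) : Set ℝ := {x | ∀ U ∈ nhds x, 0 < α U}

open Polynomial

namespace Matrix

variable {ι : Type*} [Fintype ι] [DecidableEq ι]

theorem inv_eq_transpose_mul_of_mul_mul_transpose_eq_one {R : Type*} [CommRing R]
    {P M : Matrix ι ι R} (h : P * M * Pᵀ = 1) : M⁻¹ = Pᵀ * P := by
  have hP : P * (M * Pᵀ) = 1 := by rw [← mul_assoc, h]
  have hP' : M * Pᵀ * P = 1 := mul_eq_one_comm.mp hP
  exact inv_eq_right_inv (by rw [← mul_assoc, hP'])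

theorem posDef_of_mul_mul_transpose_eq_one {P M : Matrix ι ι ℝ} (h : P * M * Pᵀ = 1) :
    M.PosDef := by
  have hPt : IsUnit Pᵀ := .of_mul_eq_one_right (P * M) h
  rw [← hPt.posDef_star_left_conjugate_iff]
  simpa [star_eq_conjTranspose, h] using PosDef.one

end Matrix

namespace Matrix.IsHermitian

variable {ι : Type*} [Fintype ι] [DecidableEq ι] {A : Matrix ι ι ℝ}

theorem inv_eq_conj_diagonal_inv (hA : A.IsHermitian) (hpos : ∀ k, 0 < hA.eigenvalues k) :
    A⁻¹ = (hA.eigenvectorUnitary : Matrix ι ι ℝ) * diagonal (fun k ↦ (hA.eigenvalues k)⁻¹) *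
      star (hA.eigenvectorUnitary : Matrix ι ι ℝ) := by
  set U : Matrix ι ι ℝ := (hA.eigenvectorUnitary : Matrix ι ι ℝ)
  have hUU : star U * U = 1 := mem_unitaryGroup_iff'.mp hA.eigenvectorUnitary.2
  have hUU' : U * star U = 1 := mem_unitaryGroup_iff.mp hA.eigenvectorUnitary.2
  have hDD : diagonal hA.eigenvalues * diagonal (fun k ↦ (hA.eigenvalues k)⁻¹) = 1 := by
    rw [diagonal_mul_diagonal, ← diagonal_one]
    exact congrArg diagonal (funext fun k ↦ mul_inv_cancel₀ (hpos k).ne')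
  have hspec : A = U * diagonal hA.eigenvalues * star U := by simpa using hA.spectral_theorem
  apply inv_eq_right_inv
  calc A * (U * diagonal (fun k ↦ (hA.eigenvalues k)⁻¹) * star U)
      = U * diagonal hA.eigenvalues * star U *
          (U * diagonal (fun k ↦ (hA.eigenvalues k)⁻¹) * star U) := by rw [← hspec]
    _ = U * (diagonal hA.eigenvalues * (star U * U) * diagonal (fun k ↦ (hA.eigenvalues k)⁻¹))
          * star U := by simp only [mul_assoc]
    _ = 1 := by rw [hUU, mul_one, hDD, mul_one, hUU']

theorem inv_apply_self_eq_sum (hA : A.IsHermitian) (hpos : ∀ k, 0 < hA.eigenvalues k) (i : ι) :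
    A⁻¹ i i = ∑ k, (hA.eigenvectorUnitary : Matrix ι ι ℝ) i k ^ 2 * (hA.eigenvalues k)⁻¹ := by
  rw [hA.inv_eq_conj_diagonal_inv hpos, mul_apply]
  refine Finset.sum_congr rfl fun k _ ↦ ?_
  simp only [mul_diagonal, star_apply, star_trivial]
  ring

theorem sum_eigenvectorUnitary_apply_sq (hA : A.IsHermitian) (i : ι) :
    ∑ k, (hA.eigenvectorUnitary : Matrix ι ι ℝ) i k ^ 2 = 1 := by
  have h := congrFun (congrFun (mem_unitaryGroup_iff.mp hA.eigenvectorUnitary.2) i) i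
  simpa only [mul_apply, star_apply, star_trivial, one_apply_eq, sq] using h

theorem inv_le_inv_apply_self (hA : A.IsHermitian) (hpos : ∀ k, 0 < hA.eigenvalues k)
    {b : ℝ} (hb : ∀ k, hA.eigenvalues k ≤ b) (i : ι) : b⁻¹ ≤ A⁻¹ i i := by
  rw [hA.inv_apply_self_eq_sum hpos, ← one_mul b⁻¹, ← hA.sum_eigenvectorUnitary_apply_sq i,
    Finset.sum_mul]
  gcongr with k
  exacts [hpos k, hb k]

theorem inv_apply_self_le_inv (hA : A.IsHermitian) {a : ℝ} (ha : 0 < a)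
    (hb : ∀ k, a ≤ hA.eigenvalues k) (i : ι) : A⁻¹ i i ≤ a⁻¹ := by
  have hpos k : 0 < hA.eigenvalues k := ha.trans_le (hb k)
  rw [hA.inv_apply_self_eq_sum hpos, ← one_mul a⁻¹, ← hA.sum_eigenvectorUnitary_apply_sq i,
    Finset.sum_mul]
  gcongr with k
  exact hb k

end Matrix.IsHermitian

theorem Polynomial.eval_eq_sum_fin {R : Type*} [CommSemiring R] {q : R[X]} {N : ℕ}
    (hq : q.natDegree ≤ N) (x : R) :
    q.eval x = ∑ a : Fin (N + 1), q.coeff a * x ^ (a : ℕ) := by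
  rw [eval_eq_sum_range' (Nat.lt_succ_of_le hq),
    Fin.sum_univ_eq_sum_range (fun a ↦ q.coeff a * x ^ a)]

section Moments

variable {α : Measure ℝ} {N : ℕ}

theorem integral_eval_mul_eval_eq_sum_mom
    (hint : ∀ k ≤ 2 * N, Integrable (fun x : ℝ => x ^ k) α) {q r : ℝ[X]}
    (hq : q.natDegree ≤ N) (hr : r.natDegree ≤ N) :
    ∫ x, q.eval x * r.eval x ∂α =
      ∑ a : Fin (N + 1), ∑ b : Fin (N + 1), q.coeff a * r.coeff b * mom α (a + b) := by
  have hterm_int (a b : Fin (N + 1)) :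
      Integrable (fun x : ℝ ↦ q.coeff a * r.coeff b * x ^ ((a : ℕ) + b)) α :=
    (hint _ (by omega)).const_mul _
  have hexpand (x : ℝ) : q.eval x * r.eval x =
      ∑ a : Fin (N + 1), ∑ b : Fin (N + 1), q.coeff a * r.coeff b * x ^ ((a : ℕ) + b) := by
    rw [eval_eq_sum_fin hq, eval_eq_sum_fin hr, Finset.sum_mul_sum]
    simp only [pow_add]
    exact Finset.sum_congr rfl fun a _ ↦ Finset.sum_congr rfl fun b _ ↦ by ring
  simp_rw [hexpand]
  rw [integral_finsetSum _ fun a _ ↦ integrable_finsetSum _ fun b _ ↦ hterm_int a b]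
  refine Finset.sum_congr rfl fun a _ ↦ ?_
  rw [integral_finsetSum _ fun b _ ↦ hterm_int a b]
  simp only [integral_const_mul, mom]

variable {p : ℕ → ℝ[X]}

def coeffMatrix (p : ℕ → ℝ[X]) (N : ℕ) : Matrix (Fin (N + 1)) (Fin (N + 1)) ℝ :=
  of fun j a ↦ (p j).coeff a

theorem coeffMatrix_mul_momMatrix_mul_transpose_apply
    (hint : ∀ k ≤ 2 * N, Integrable (fun x : ℝ => x ^ k) α) (hp : ∀ j ≤ N, (p j).natDegree ≤ N)
    (j k : Fin (N + 1)) :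
    (coeffMatrix p N * momMatrix α N * (coeffMatrix p N)ᵀ) j k =
      ∫ x, (p j).eval x * (p k).eval x ∂α := by
  rw [integral_eval_mul_eval_eq_sum_mom hint (hp j j.is_le) (hp k k.is_le)]
  simp only [mul_apply, transpose_apply, coeffMatrix, momMatrix, of_apply, Finset.sum_mul]
  rw [Finset.sum_comm]
  exact Finset.sum_congr rfl fun a _ ↦ Finset.sum_congr rfl fun b _ ↦ by ring

theorem coeffMatrix_mul_momMatrix_mul_transpose_eq_one
    (hint : ∀ k ≤ 2 * N, Integrable (fun x : ℝ => x ^ k) α) (hp : ∀ j ≤ N, (p j).natDegree ≤ N)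
    (horth : ∀ j k, ∫ x, (p j).eval x * (p k).eval x ∂α = if j = k then 1 else 0) :
    coeffMatrix p N * momMatrix α N * (coeffMatrix p N)ᵀ = 1 := by
  ext j k
  simp only [coeffMatrix_mul_momMatrix_mul_transpose_apply hint hp, horth, one_apply, Fin.val_inj]

theorem transpose_coeffMatrix_mul_self_zero_zero :
    ((coeffMatrix p N)ᵀ * coeffMatrix p N) 0 0 = ∑ j ∈ Finset.range (N + 1), (p j).eval 0 ^ 2 := by
  rw [mul_apply, ← Fin.sum_univ_eq_sum_range (fun j ↦ (p j).eval 0 ^ 2)]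
  simp [coeffMatrix, coeff_zero_eq_eval_zero, sq]

end Moments

theorem stmt_7_general (n : ℕ) (α : Measure ℝ)
    (hint : ∀ k ≤ 2 * n, Integrable (fun x : ℝ => x ^ k) α)
    (p : ℕ → Polynomial ℝ)
    (hdeg : ∀ k, (p k).natDegree = k)
    (horth : ∀ j k, ∫ x, (p j).eval x * (p k).eval x ∂α = if j = k then 1 else 0)
    (hM : (momMatrix α n).IsHermitian)
    (ξ : Fin (n + 1) → ℝ) (hmono : Monotone ξ)
    (hperm : ∃ σ : Equiv.Perm (Fin (n + 1)), ∀ i, ξ i = hM.eigenvalues (σ i)) :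
    1 / ξ (Fin.last n) ≤ ∑ j ∈ Finset.range (n + 1), (p j).eval 0 ^ 2 ∧
    ∑ j ∈ Finset.range (n + 1), (p j).eval 0 ^ 2 = (momMatrix α n)⁻¹ 0 0 ∧
    (momMatrix α n)⁻¹ 0 0 ≤ 1 / ξ 0 := by
  have hPMP : coeffMatrix p n * momMatrix α n * (coeffMatrix p n)ᵀ = 1 :=
    coeffMatrix_mul_momMatrix_mul_transpose_eq_one hint (fun j hj ↦ (hdeg j).trans_le hj) horth
  have hsum : ∑ j ∈ Finset.range (n + 1), (p j).eval 0 ^ 2 = (momMatrix α n)⁻¹ 0 0 := by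
    rw [inv_eq_transpose_mul_of_mul_mul_transpose_eq_one hPMP,
      transpose_coeffMatrix_mul_self_zero_zero]
  have hpos : ∀ k, 0 < hM.eigenvalues k :=
    (posDef_of_mul_mul_transpose_eq_one hPMP).eigenvalues_pos
  obtain ⟨σ, hσ⟩ := hperm
  have hrange (k : Fin (n + 1)) : ξ 0 ≤ hM.eigenvalues k ∧ hM.eigenvalues k ≤ ξ (Fin.last n) := by
    rw [← σ.apply_symm_apply k, ← hσ]
    exact ⟨hmono (Fin.zero_le _), hmono (Fin.le_last _)⟩
  refine ⟨?_, hsum, ?_⟩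
  · rw [one_div, hsum]
    exact hM.inv_le_inv_apply_self hpos (fun k ↦ (hrange k).2) 0
  · rw [one_div]
    exact hM.inv_apply_self_le_inv (hσ 0 ▸ hpos _) (fun k ↦ (hrange k).1) 0

theorem stmt_7 (n : ℕ) (α : Measure ℝ) [IsProbabilityMeasure α]
    (hsupp : (measSupport α).Infinite)
    (hint : ∀ k ≤ 2 * n, Integrable (fun x : ℝ => x ^ k) α)
    (p : ℕ → Polynomial ℝ)
    (hdeg : ∀ k, (p k).natDegree = k)
    (hlead : ∀ k, 0 < (p k).leadingCoeff)
    (horth : ∀ j k, ∫ x, (p j).eval x * (p k).eval x ∂α = if j = k then 1 else 0)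
    (hM : (momMatrix α n).IsHermitian)
    (ξ : Fin (n + 1) → ℝ) (hmono : Monotone ξ)
    (hperm : ∃ σ : Equiv.Perm (Fin (n + 1)), ∀ i, ξ i = hM.eigenvalues (σ i)) :
    1 / ξ (Fin.last n) ≤ ∑ j ∈ Finset.range (n + 1), (p j).eval 0 ^ 2 ∧
    ∑ j ∈ Finset.range (n + 1), (p j).eval 0 ^ 2 = (momMatrix α n)⁻¹ 0 0 ∧
    (momMatrix α n)⁻¹ 0 0 ≤ 1 / ξ 0 :=
  stmt_7_general n α hint p hdeg horth hM ξ hmono hperm
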